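/- arXiv:1805.07686 — 2 statements merged into one kernel-verified Lean document; each statement's English description precedes it below -/
import Mathlib

section
/- (Lemma 6.2, unbounded case.) If S is unbounded (F̄(x) > 0 for all x > 0) and the tail of S has upper Matuszewska index less than −2, expressed via the equivalent Potter-type bound — there exist constants C > 0, ε > 0 and x₀ > 0 such that F̄(γx) ≤ C·γ^{−(2+ε)}·F̄(x) for all x ≥ x₀ and all γ ≥ 1 — then the M/G/1 SRPT mean response time dominates the logarithm of 1/(1−ρ) in heavy traffic: lim_{λ → (1/m)⁻} ln(1/(1−λm)) / T̄(λ) = 0. -/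
/-!
Write `G(x) = ∫_x^∞ t f(t) dt`, so that `1 - ρ_{≤x} = (1 - ρ) + λ G(x)`. Summing the Potter
bound (exponent `-α`, `α = 2 + ε`) over the dyadic blocks `(2^k b, 2^(k+1) b]` gives
`∫_b^∞ t^p f(t) dt = O(b^p F̄(b))` for `p < α`. For `p = 2` this makes `E[S²]` finite, so that
`T̄(λ)` is a finite integral when `ρ < 1`; for `p = 1` it gives `G(b) ≤ K b F̄(b)`, and with
`F̄(b) = O(b^(-α))` also `G(b) = O(b^(1-α))`.

For `λ` close to `1/m` choose `b` with `λ G(b) = 1 - ρ` (intermediate value theorem), so that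
`1 - ρ_{≤b} = 2 (1 - ρ)`. Keeping only the jobs larger than `b` and the first term of Schrage's
formula, `T̄(λ) ≥ λ c F̄(b) / (8 (1 - ρ)²) ≥ c / (8 K b (1 - ρ))` with `c = ∫_0^a t² f(t) dt > 0`
for a fixed `a ≤ b`, and `G(b) = O(b^(1-α))` bounds `b` by a multiple of `(1 - ρ)^(-1/(α-1))`.
Hence `T̄(λ) ≳ (1 - ρ)^(-κ)` with `κ = (α - 2)/(α - 1) > 0`, which outgrows `log (1/(1 - ρ))`.
-/

open MeasureTheory Filter

/-- Relevant load `ρ_{≤x} = λ ∫₀^x t f(t) dt`. -/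
noncomputable def rhoLe (f : ℝ → ℝ) (lam x : ℝ) : ℝ :=
  lam * ∫ t in (0:ℝ)..x, t * f t

/-- Tail of the service requirement distribution, `F̄(x) = ∫_x^∞ f(t) dt`. -/
noncomputable def tailS (f : ℝ → ℝ) (x : ℝ) : ℝ :=
  ∫ t in Set.Ioi x, f t

/-- Schrage's exact formula `T̄_λ(x)` for the mean response time of a size-`x`
job in an M/G/1 queue under SRPT. -/
noncomputable def Tsrpt1 (f : ℝ → ℝ) (lam x : ℝ) : ℝ :=
  (lam * (∫ t in (0:ℝ)..x, t ^ 2 * f t) + lam * x ^ 2 * tailS f x)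
      / (2 * (1 - rhoLe f lam x) ^ 2)
    + ∫ t in (0:ℝ)..x, 1 / (1 - rhoLe f lam t)

/-- Overall M/G/1 SRPT mean response time `T̄(λ) = ∫₀^∞ T̄_λ(x) f(x) dx`. -/
noncomputable def TsrptMean (f : ℝ → ℝ) (lam : ℝ) : ℝ :=
  ∫ x in Set.Ioi (0:ℝ), Tsrpt1 f lam x * f x

open Set Topology

section Tail

variable {g : ℝ → ℝ}

theorem setIntegral_Ioi_eq_sub_intervalIntegral (hg : Integrable g) (x : ℝ) :
    ∫ t in Ioi x, g t = (∫ t in Ioi 0, g t) - ∫ t in (0:ℝ)..x, g t := by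
  rw [← intervalIntegral.integral_interval_add_Ioi (a := 0) (b := x) hg.integrableOn
    hg.integrableOn]
  ring

theorem continuous_setIntegral_Ioi (hg : Integrable g) :
    Continuous fun x => ∫ t in Ioi x, g t := by
  rw [funext (setIntegral_Ioi_eq_sub_intervalIntegral hg)]
  exact continuous_const.sub
    (intervalIntegral.continuous_primitive (fun _ _ => hg.intervalIntegrable) 0)

theorem tendsto_setIntegral_Ioi_atTop (hg : Integrable g) :
    Tendsto (fun x => ∫ t in Ioi x, g t) atTop (𝓝 0) := by
  rw [funext (setIntegral_Ioi_eq_sub_intervalIntegral hg)]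
  simpa using (tendsto_const_nhds (x := ∫ t in Ioi 0, g t)).sub
    (intervalIntegral_tendsto_integral_Ioi 0 hg.integrableOn tendsto_id)

theorem antitone_setIntegral_Ioi (hg : Integrable g) (hg0 : 0 ≤ g) :
    Antitone fun x => ∫ t in Ioi x, g t :=
  fun _ _ hxy => setIntegral_mono_set hg.integrableOn (.of_forall hg0)
    (Ioi_subset_Ioi hxy).eventuallyLE

theorem pow_mul_setIntegral_Ioi_le (hg0 : 0 ≤ g) {x : ℝ} (hx : 0 ≤ x) (p : ℕ)
    (hg : IntegrableOn g (Ioi x)) (hgp : IntegrableOn (fun t => t ^ p * g t) (Ioi x)) :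
    x ^ p * ∫ t in Ioi x, g t ≤ ∫ t in Ioi x, t ^ p * g t := by
  rw [← integral_const_mul]
  exact setIntegral_mono_on (hg.const_mul _) hgp measurableSet_Ioi fun t ht =>
    mul_le_mul_of_nonneg_right (pow_le_pow_left₀ hx (le_of_lt ht) p) (hg0 t)

theorem integrableOn_Ioi_and_setIntegral_le_of_Ioc {b M : ℝ} (hg0 : ∀ t > b, 0 ≤ g t)
    {u : ℕ → ℝ} (hu : Tendsto u atTop atTop) (hub : ∀ n, b ≤ u n)
    (hint : ∀ n, IntegrableOn g (Ioc b (u n))) (hM : ∀ n, ∫ t in Ioc b (u n), g t ≤ M) :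
    IntegrableOn g (Ioi b) ∧ ∫ t in Ioi b, g t ≤ M := by
  have hI : IntegrableOn g (Ioi b) := by
    refine integrableOn_Ioi_of_intervalIntegral_norm_bounded M b hint hu (.of_forall fun n => ?_)
    rw [intervalIntegral.integral_of_le (hub n), setIntegral_congr_fun measurableSet_Ioc
      fun t ht => Real.norm_of_nonneg (hg0 t ht.1)]
    exact hM n
  refine ⟨hI, le_of_tendsto' (intervalIntegral_tendsto_integral_Ioi b hI hu) fun n => ?_⟩
  rw [intervalIntegral.integral_of_le (hub n)]
  exact hM n

theorem exists_ge_eq_of_tendsto_atTop_zero (hg : Continuous g)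
    (hlim : Tendsto g atTop (𝓝 0)) {a y : ℝ} (hy : 0 < y) (hya : y ≤ g a) :
    ∃ b ≥ a, g b = y := by
  obtain ⟨X, hXy, hXa⟩ := ((hlim.eventually (eventually_lt_nhds hy)).and
    (eventually_ge_atTop a)).exists
  obtain ⟨b, hb, hgb⟩ := intermediate_value_Icc' hXa hg.continuousOn ⟨hXy.le, hya⟩
  exact ⟨b, hb.1, hgb⟩

end Tail

theorem mul_le_rpow_of_le_mul_rpow_neg {b δ A β : ℝ} (hb : 0 < b) (hδ : 0 < δ) (hβ : 0 < β)
    (h : δ ≤ A * b ^ (-β)) : b * δ ≤ A ^ β⁻¹ * δ ^ (1 - β⁻¹) := by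
  have hA : 0 < A := pos_of_mul_pos_left (hδ.trans_le h) (Real.rpow_nonneg hb.le _)
  have h1 : b ^ β ≤ A / δ := by
    rw [Real.rpow_neg hb.le, ← div_eq_mul_inv, le_div_iff₀ (Real.rpow_pos_of_pos hb β)] at h
    rw [le_div_iff₀ hδ]
    linarith
  have h2 : b ≤ (A / δ) ^ β⁻¹ :=
    calc b = (b ^ β) ^ β⁻¹ := (Real.rpow_rpow_inv hb.le hβ.ne').symm
      _ ≤ (A / δ) ^ β⁻¹ := Real.rpow_le_rpow (by positivity) h1 (inv_nonneg.2 hβ.le)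
  calc b * δ ≤ (A / δ) ^ β⁻¹ * δ := mul_le_mul_of_nonneg_right h2 hδ.le
    _ = A ^ β⁻¹ * δ ^ (1 - β⁻¹) := by
      rw [Real.div_rpow hA.le hδ.le, Real.rpow_sub hδ, Real.rpow_one]
      field_simp

theorem tendsto_log_one_div_div_of_rpow_le {ι : Type*} {l : Filter ι} {δ T : ι → ℝ}
    {c κ : ℝ} (hc : 0 < c) (hκ : 0 < κ) (hδ : Tendsto δ l (𝓝[>] 0))
    (hT : ∀ᶠ i in l, c * δ i ^ (-κ) ≤ T i) :
    Tendsto (fun i => Real.log (1 / δ i) / T i) l (𝓝 0) := by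
  have hlim := ((tendsto_log_mul_rpow_nhdsGT_zero hκ).comp hδ).neg.const_mul c⁻¹
  rw [neg_zero, mul_zero] at hlim
  have hbound : ∀ᶠ i in l, 0 ≤ Real.log (1 / δ i) / T i ∧
      Real.log (1 / δ i) / T i ≤ c⁻¹ * -(Real.log (δ i) * δ i ^ κ) := by
    filter_upwards [hT, hδ (Ioo_mem_nhdsGT zero_lt_one)] with i hTi ⟨hδ0, hδ1⟩
    have hlog : 0 ≤ Real.log (1 / δ i) := Real.log_nonneg ((one_le_div hδ0).2 hδ1.le)
    have hcδ : 0 < c * δ i ^ (-κ) := by positivity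
    refine ⟨div_nonneg hlog (hcδ.trans_le hTi).le, ?_⟩
    calc Real.log (1 / δ i) / T i ≤ Real.log (1 / δ i) / (c * δ i ^ (-κ)) :=
          div_le_div_of_nonneg_left hlog hcδ hTi
      _ = c⁻¹ * -(Real.log (δ i) * δ i ^ κ) := by
          rw [Real.rpow_neg hδ0.le, one_div, Real.log_inv]
          field_simp
  exact squeeze_zero' (hbound.mono fun _ h => h.1) (hbound.mono fun _ h => h.2) hlim

theorem tendsto_one_sub_mul_nhdsGT_zero {m : ℝ} (hm : 0 < m) :
    Tendsto (fun lam => 1 - lam * m) (𝓝[<] (1 / m)) (𝓝[>] 0) := by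
  refine tendsto_nhdsWithin_iff.2 ⟨?_, ?_⟩
  · refine ((continuous_const.sub (continuous_id.mul continuous_const)).tendsto' (1 / m) 0
      (by simp [hm.ne'])).mono_left nhdsWithin_le_nhds
  · filter_upwards [self_mem_nhdsWithin] with lam (hlam : lam < 1 / m)
    rw [lt_div_iff₀ hm] at hlam
    exact sub_pos.2 hlam

/-- The Potter-type form of "the upper Matuszewska index of `F̄` is less than `-α`". -/
def TailPotterBound (f : ℝ → ℝ) (C α x₀ : ℝ) : Prop :=
  ∀ x ≥ x₀, ∀ γ ≥ (1:ℝ), tailS f (γ * x) ≤ C * γ ^ (-α) * tailS f x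

section Potter

variable {f : ℝ → ℝ} {C α x₀ : ℝ}

theorem tailS_nonneg (hf0 : ∀ t, 0 ≤ f t) (x : ℝ) : 0 ≤ tailS f x :=
  setIntegral_nonneg measurableSet_Ioi fun t _ => hf0 t

theorem integrableOn_pow_mul_Ioc (hf : Integrable f) (p : ℕ) (a b : ℝ) :
    IntegrableOn (fun t => t ^ p * f t) (Ioc a b) :=
  (hf.integrableOn.continuousOn_mul (continuous_pow p).continuousOn isCompact_Icc).mono_set
    Ioc_subset_Icc_self

theorem TailPotterBound.tailS_le_rpow (hP : TailPotterBound f C α x₀) (hx₀ : 0 < x₀)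
    {x : ℝ} (hx : x₀ ≤ x) : tailS f x ≤ C * x₀ ^ α * tailS f x₀ * x ^ (-α) := by
  have h := hP x₀ le_rfl (x / x₀) ((one_le_div hx₀).2 hx)
  rw [div_mul_cancel₀ _ hx₀.ne', Real.div_rpow (hx₀.le.trans hx) hx₀.le,
    Real.rpow_neg hx₀.le, div_inv_eq_mul] at h
  linarith

theorem TailPotterBound.mul_tailS_nonneg (hP : TailPotterBound f C α x₀)
    (hf0 : ∀ t, 0 ≤ f t) {b : ℝ} (hb : x₀ ≤ b) : 0 ≤ C * tailS f b := by
  have h := hP b hb 1 le_rfl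
  rw [one_mul, Real.one_rpow, mul_one] at h
  exact (tailS_nonneg hf0 b).trans h

theorem TailPotterBound.setIntegral_Ioc_two_pow_mul_le (hP : TailPotterBound f C α x₀)
    (hf0 : ∀ t, 0 ≤ f t) (hf : Integrable f) (p : ℕ) {b : ℝ} (hb0 : 0 ≤ b)
    (hb : x₀ ≤ b) (k : ℕ) :
    ∫ t in Ioc (2 ^ k * b) (2 ^ (k + 1) * b), t ^ p * f t
      ≤ 2 ^ p * b ^ p * (C * tailS f b) * ((2:ℝ) ^ ((p:ℝ) - α)) ^ k := by
  calc ∫ t in Ioc (2 ^ k * b) (2 ^ (k + 1) * b), t ^ p * f t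
      ≤ ∫ t in Ioc (2 ^ k * b) (2 ^ (k + 1) * b), (2 ^ (k + 1) * b) ^ p * f t :=
        setIntegral_mono_on (integrableOn_pow_mul_Ioc hf p _ _)
          (hf.integrableOn.const_mul _) measurableSet_Ioc fun t ht =>
          mul_le_mul_of_nonneg_right
            (pow_le_pow_left₀ ((by positivity : (0:ℝ) ≤ 2 ^ k * b).trans ht.1.le) ht.2 p)
            (hf0 t)
    _ = (2 ^ (k + 1) * b) ^ p * ∫ t in Ioc (2 ^ k * b) (2 ^ (k + 1) * b), f t :=
        integral_const_mul _ _
    _ ≤ (2 ^ (k + 1) * b) ^ p * tailS f (2 ^ k * b) :=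
        mul_le_mul_of_nonneg_left (setIntegral_mono_set hf.integrableOn (.of_forall hf0)
          Ioc_subset_Ioi_self.eventuallyLE) (by positivity)
    _ ≤ (2 ^ (k + 1) * b) ^ p * (C * ((2:ℝ) ^ k) ^ (-α) * tailS f b) :=
        mul_le_mul_of_nonneg_left (hP b hb _ (one_le_pow₀ one_le_two)) (by positivity)
    _ = 2 ^ p * b ^ p * (C * tailS f b) * ((2:ℝ) ^ ((p:ℝ) - α)) ^ k := by
        rw [← Real.rpow_pow_comm zero_le_two, sub_eq_add_neg, Real.rpow_add two_pos,
          Real.rpow_natCast]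
        ring

theorem TailPotterBound.setIntegral_Ioc_self_two_pow_mul_le (hP : TailPotterBound f C α x₀)
    (hf0 : ∀ t, 0 ≤ f t) (hf : Integrable f) {p : ℕ} (hp : (p:ℝ) < α) {b : ℝ}
    (hb0 : 0 ≤ b) (hb : x₀ ≤ b) (N : ℕ) :
    ∫ t in Ioc b (2 ^ N * b), t ^ p * f t
      ≤ 2 ^ p * b ^ p * (C * tailS f b) / (1 - (2:ℝ) ^ ((p:ℝ) - α)) := by
  set r : ℝ := (2:ℝ) ^ ((p:ℝ) - α)
  have hr0 : 0 < r := Real.rpow_pos_of_pos two_pos _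
  have hr1 : r < 1 := Real.rpow_lt_one_of_one_lt_of_neg one_lt_two (by linarith)
  have hM : 0 ≤ 2 ^ p * b ^ p * (C * tailS f b) := by
    have := hP.mul_tailS_nonneg hf0 hb
    positivity
  have hsum : ∀ n : ℕ, ∫ t in Ioc b (2 ^ n * b), t ^ p * f t
      ≤ 2 ^ p * b ^ p * (C * tailS f b) * ∑ k ∈ Finset.range n, r ^ k := by
    intro n
    induction n with
    | zero => simp
    | succ n ih =>
      have hle : b ≤ 2 ^ n * b := le_mul_of_one_le_left hb0 (one_le_pow₀ one_le_two)
      rw [← Ioc_union_Ioc_eq_Ioc hle (mul_le_mul_of_nonneg_right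
        (pow_le_pow_right₀ one_le_two n.le_succ) hb0),
        setIntegral_union (Ioc_disjoint_Ioc_of_le le_rfl) measurableSet_Ioc
          (integrableOn_pow_mul_Ioc hf p _ _) (integrableOn_pow_mul_Ioc hf p _ _),
        Finset.sum_range_succ, mul_add]
      exact add_le_add ih (hP.setIntegral_Ioc_two_pow_mul_le hf0 hf p hb0 hb n)
  calc _ ≤ _ := hsum N
    _ ≤ 2 ^ p * b ^ p * (C * tailS f b) * (r ^ 0 / (1 - r)) := by
        rw [Finset.range_eq_Ico]
        exact mul_le_mul_of_nonneg_left (geom_sum_Ico_le_of_lt_one hr0.le hr1) hM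
    _ = _ := by rw [pow_zero, mul_one_div]

theorem TailPotterBound.integrableOn_Ioi_pow_mul_and_setIntegral_le
    (hP : TailPotterBound f C α x₀) (hf0 : ∀ t, 0 ≤ f t) (hf : Integrable f) (hx₀ : 0 < x₀)
    {p : ℕ} (hp : (p:ℝ) < α) {b : ℝ} (hb : x₀ ≤ b) :
    IntegrableOn (fun t => t ^ p * f t) (Ioi b) ∧
      ∫ t in Ioi b, t ^ p * f t
        ≤ 2 ^ p * b ^ p * (C * tailS f b) / (1 - (2:ℝ) ^ ((p:ℝ) - α)) := by
  have hb0 : 0 < b := hx₀.trans_le hb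
  exact integrableOn_Ioi_and_setIntegral_le_of_Ioc
    (fun t ht => mul_nonneg (pow_nonneg (hb0.trans ht).le p) (hf0 t))
    ((tendsto_pow_atTop_atTop_of_one_lt one_lt_two).atTop_mul_const hb0)
    (fun n => le_mul_of_one_le_left hb0.le (one_le_pow₀ one_le_two))
    (fun n => integrableOn_pow_mul_Ioc hf p _ _)
    (hP.setIntegral_Ioc_self_two_pow_mul_le hf0 hf hp hb0.le hb)

end Potter

/-- `λ * tailFirstMoment f x = ρ - ρ_{≤x}` is the load brought by jobs larger than `x`. -/
noncomputable def tailFirstMoment (f : ℝ → ℝ) (x : ℝ) : ℝ :=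
  ∫ t in Ioi x, t * f t

section Queue

variable {f : ℝ → ℝ} {m lam : ℝ}

theorem mul_nonneg_of_density (hf0 : ∀ t, 0 ≤ f t) (hfz : ∀ t ≤ 0, f t = 0) (t : ℝ) :
    0 ≤ t * f t := by
  rcases le_or_gt t 0 with ht | ht
  · rw [hfz t ht, mul_zero]
  · exact mul_nonneg ht.le (hf0 t)

theorem tailFirstMoment_nonneg (hf0 : ∀ t, 0 ≤ f t) (hfz : ∀ t ≤ 0, f t = 0) (x : ℝ) :
    0 ≤ tailFirstMoment f x :=
  setIntegral_nonneg measurableSet_Ioi fun t _ => mul_nonneg_of_density hf0 hfz t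

theorem one_sub_rhoLe_eq (hf1 : Integrable fun t => t * f t) (hm : m = tailFirstMoment f 0)
    (lam x : ℝ) : 1 - rhoLe f lam x = 1 - lam * m + lam * tailFirstMoment f x := by
  rw [rhoLe, hm, tailFirstMoment, tailFirstMoment, setIntegral_Ioi_eq_sub_intervalIntegral hf1 x]
  ring

theorem one_sub_mul_le_one_sub_rhoLe (hf0 : ∀ t, 0 ≤ f t) (hfz : ∀ t ≤ 0, f t = 0)
    (hf1 : Integrable fun t => t * f t) (hm : m = tailFirstMoment f 0) (hlam : 0 ≤ lam)
    (x : ℝ) : 1 - lam * m ≤ 1 - rhoLe f lam x := by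
  rw [one_sub_rhoLe_eq hf1 hm]
  linarith [mul_nonneg hlam (tailFirstMoment_nonneg hf0 hfz x)]

theorem antitone_tailFirstMoment (hf0 : ∀ t, 0 ≤ f t) (hfz : ∀ t ≤ 0, f t = 0)
    (hf1 : Integrable fun t => t * f t) : Antitone (tailFirstMoment f) :=
  antitone_setIntegral_Ioi hf1 (mul_nonneg_of_density hf0 hfz)

theorem one_sub_rhoLe_le_of_le (hf0 : ∀ t, 0 ≤ f t) (hfz : ∀ t ≤ 0, f t = 0)
    (hf1 : Integrable fun t => t * f t) (hm : m = tailFirstMoment f 0) (hlam : 0 ≤ lam)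
    {x y : ℝ} (hxy : x ≤ y) : 1 - rhoLe f lam y ≤ 1 - rhoLe f lam x := by
  rw [one_sub_rhoLe_eq hf1 hm, one_sub_rhoLe_eq hf1 hm]
  have := antitone_tailFirstMoment hf0 hfz hf1 hxy
  gcongr

theorem continuous_rhoLe (hf1 : Integrable fun t => t * f t) (lam : ℝ) :
    Continuous (rhoLe f lam) :=
  continuous_const.mul
    (intervalIntegral.continuous_primitive (fun _ _ => hf1.intervalIntegrable) 0)

theorem intervalIntegral_sq_mul_add_sq_mul_tailS_le (hf0 : ∀ t, 0 ≤ f t) (hf : Integrable f)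
    (hf2 : Integrable fun t => t ^ 2 * f t) {x : ℝ} (hx : 0 ≤ x) :
    (∫ t in (0:ℝ)..x, t ^ 2 * f t) + x ^ 2 * tailS f x ≤ ∫ t in Ioi 0, t ^ 2 * f t := by
  rw [← intervalIntegral.integral_interval_add_Ioi (a := 0) (b := x) hf2.integrableOn
    hf2.integrableOn]
  gcongr
  exact pow_mul_setIntegral_Ioi_le hf0 hx 2 hf.integrableOn hf2.integrableOn

theorem one_sub_rhoLe_pos (hf0 : ∀ t, 0 ≤ f t) (hfz : ∀ t ≤ 0, f t = 0)
    (hf1 : Integrable fun t => t * f t) (hm : m = tailFirstMoment f 0) (hlam : 0 ≤ lam)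
    (hlamm : lam * m < 1) (x : ℝ) : 0 < 1 - rhoLe f lam x := by
  linarith [one_sub_mul_le_one_sub_rhoLe hf0 hfz hf1 hm hlam x]

theorem continuous_Tsrpt1 (hf0 : ∀ t, 0 ≤ f t) (hfz : ∀ t ≤ 0, f t = 0) (hf : Integrable f)
    (hf1 : Integrable fun t => t * f t) (hm : m = tailFirstMoment f 0) (hlam : 0 ≤ lam)
    (hlamm : lam * m < 1) : Continuous (Tsrpt1 f lam) := by
  have hρ := continuous_rhoLe hf1 lam
  have hpos := one_sub_rhoLe_pos hf0 hfz hf1 hm hlam hlamm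
  have hF : Continuous (tailS f) := continuous_setIntegral_Ioi hf
  have h2 : Continuous fun x => ∫ t in (0:ℝ)..x, t ^ 2 * f t :=
    intervalIntegral.continuous_primitive
      (fun a b => ⟨integrableOn_pow_mul_Ioc hf 2 a b, integrableOn_pow_mul_Ioc hf 2 b a⟩) 0
  have hinv : Continuous fun t => 1 / (1 - rhoLe f lam t) :=
    continuous_const.div (continuous_const.sub hρ) fun t => (hpos t).ne'
  exact (((continuous_const.mul h2).add ((continuous_const.mul (continuous_pow 2)).mul hF)).div
    (continuous_const.mul ((continuous_const.sub hρ).pow 2))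
    fun x => (mul_pos two_pos (pow_pos (hpos x) 2)).ne').add
    (intervalIntegral.continuous_primitive (fun a b => hinv.intervalIntegrable a b) 0)

theorem Tsrpt1_nonneg (hf0 : ∀ t, 0 ≤ f t) (hfz : ∀ t ≤ 0, f t = 0)
    (hf1 : Integrable fun t => t * f t) (hm : m = tailFirstMoment f 0) (hlam : 0 ≤ lam)
    (hlamm : lam * m < 1) {x : ℝ} (hx : 0 ≤ x) : 0 ≤ Tsrpt1 f lam x := by
  have hpos := one_sub_rhoLe_pos hf0 hfz hf1 hm hlam hlamm
  have h2 : 0 ≤ ∫ t in (0:ℝ)..x, t ^ 2 * f t :=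
    intervalIntegral.integral_nonneg hx fun t _ => mul_nonneg (sq_nonneg t) (hf0 t)
  have hinv : 0 ≤ ∫ t in (0:ℝ)..x, 1 / (1 - rhoLe f lam t) :=
    intervalIntegral.integral_nonneg hx fun t _ => (one_div_pos.2 (hpos t)).le
  exact add_nonneg (div_nonneg (add_nonneg (mul_nonneg hlam h2)
    (mul_nonneg (mul_nonneg hlam (sq_nonneg x)) (tailS_nonneg hf0 x))) (by positivity)) hinv

theorem Tsrpt1_le (hf0 : ∀ t, 0 ≤ f t) (hfz : ∀ t ≤ 0, f t = 0) (hf : Integrable f)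
    (hf1 : Integrable fun t => t * f t) (hf2 : Integrable fun t => t ^ 2 * f t)
    (hm : m = tailFirstMoment f 0) (hlam : 0 ≤ lam) (hlamm : lam * m < 1) {x : ℝ}
    (hx : 0 ≤ x) :
    Tsrpt1 f lam x
      ≤ lam * (∫ t in Ioi 0, t ^ 2 * f t) / (2 * (1 - lam * m) ^ 2) + x / (1 - lam * m) := by
  have hδ : 0 < 1 - lam * m := by linarith
  have hρ := one_sub_mul_le_one_sub_rhoLe hf0 hfz hf1 hm hlam
  have hpos := one_sub_rhoLe_pos hf0 hfz hf1 hm hlam hlamm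
  have hM₂ : 0 ≤ ∫ t in Ioi 0, t ^ 2 * f t :=
    setIntegral_nonneg measurableSet_Ioi fun t _ => mul_nonneg (sq_nonneg t) (hf0 t)
  have hnum : lam * (∫ t in (0:ℝ)..x, t ^ 2 * f t) + lam * x ^ 2 * tailS f x
      ≤ lam * ∫ t in Ioi 0, t ^ 2 * f t := by
    have := mul_le_mul_of_nonneg_left
      (intervalIntegral_sq_mul_add_sq_mul_tailS_le hf0 hf hf2 hx) hlam
    linarith
  have hden : 2 * (1 - lam * m) ^ 2 ≤ 2 * (1 - rhoLe f lam x) ^ 2 := by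
    linarith [pow_le_pow_left₀ hδ.le (hρ x) 2]
  have hfirst := div_le_div₀ (mul_nonneg hlam hM₂) hnum (by positivity) hden
  have hsecond : ∫ t in (0:ℝ)..x, 1 / (1 - rhoLe f lam t)
      ≤ ∫ t in (0:ℝ)..x, 1 / (1 - lam * m) :=
    intervalIntegral.integral_mono_on hx
      ((continuous_const.div (continuous_const.sub (continuous_rhoLe hf1 lam))
        fun t => (hpos t).ne').intervalIntegrable 0 x)
      intervalIntegrable_const fun t _ => one_div_le_one_div_of_le hδ (hρ t)
  rw [intervalIntegral.integral_const, smul_eq_mul, sub_zero, mul_one_div] at hsecond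
  exact add_le_add hfirst hsecond

theorem integrableOn_Tsrpt1_mul (hf0 : ∀ t, 0 ≤ f t) (hfz : ∀ t ≤ 0, f t = 0)
    (hf : Integrable f) (hf1 : Integrable fun t => t * f t)
    (hf2 : Integrable fun t => t ^ 2 * f t) (hm : m = tailFirstMoment f 0) (hlam : 0 ≤ lam)
    (hlamm : lam * m < 1) : IntegrableOn (fun x => Tsrpt1 f lam x * f x) (Ioi 0) := by
  set A := lam * (∫ t in Ioi 0, t ^ 2 * f t) / (2 * (1 - lam * m) ^ 2)
  refine Integrable.mono' (g := fun x => A * f x + (1 - lam * m)⁻¹ * (x * f x))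
    ((hf.integrableOn.const_mul _).add (hf1.integrableOn.const_mul _))
    ((continuous_Tsrpt1 hf0 hfz hf hf1 hm hlam hlamm).aestronglyMeasurable.mul
      hf.integrableOn.aestronglyMeasurable)
    (ae_restrict_of_forall_mem measurableSet_Ioi fun x (hx : 0 < x) => ?_)
  rw [Real.norm_of_nonneg (mul_nonneg (Tsrpt1_nonneg hf0 hfz hf1 hm hlam hlamm hx.le) (hf0 x))]
  calc Tsrpt1 f lam x * f x ≤ (A + x / (1 - lam * m)) * f x :=
        mul_le_mul_of_nonneg_right (Tsrpt1_le hf0 hfz hf hf1 hf2 hm hlam hlamm hx.le) (hf0 x)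
    _ = A * f x + (1 - lam * m)⁻¹ * (x * f x) := by ring

theorem le_Tsrpt1 (hf0 : ∀ t, 0 ≤ f t) (hfz : ∀ t ≤ 0, f t = 0) (hf : Integrable f)
    (hf1 : Integrable fun t => t * f t) (hm : m = tailFirstMoment f 0) (hlam : 0 ≤ lam)
    (hlamm : lam * m < 1) {b x : ℝ} (hb : 0 ≤ b) (hbx : b ≤ x) :
    lam * (∫ t in (0:ℝ)..b, t ^ 2 * f t) / (2 * (1 - rhoLe f lam b) ^ 2)
      ≤ Tsrpt1 f lam x := by
  have hpos := one_sub_rhoLe_pos hf0 hfz hf1 hm hlam hlamm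
  have hx : 0 ≤ x := hb.trans hbx
  have hI : ∫ t in (0:ℝ)..b, t ^ 2 * f t ≤ ∫ t in (0:ℝ)..x, t ^ 2 * f t :=
    intervalIntegral.integral_mono_interval le_rfl hb hbx
      (.of_forall fun t => mul_nonneg (sq_nonneg t) (hf0 t))
      ⟨integrableOn_pow_mul_Ioc hf 2 0 x, integrableOn_pow_mul_Ioc hf 2 x 0⟩
  have hnum : lam * (∫ t in (0:ℝ)..b, t ^ 2 * f t)
      ≤ lam * (∫ t in (0:ℝ)..x, t ^ 2 * f t) + lam * x ^ 2 * tailS f x := by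
    have := mul_nonneg (mul_nonneg hlam (sq_nonneg x)) (tailS_nonneg hf0 x)
    nlinarith
  have hden : 2 * (1 - rhoLe f lam x) ^ 2 ≤ 2 * (1 - rhoLe f lam b) ^ 2 := by
    linarith [pow_le_pow_left₀ (hpos x).le (one_sub_rhoLe_le_of_le hf0 hfz hf1 hm hlam hbx) 2]
  have hinv : 0 ≤ ∫ t in (0:ℝ)..x, 1 / (1 - rhoLe f lam t) :=
    intervalIntegral.integral_nonneg hx fun t _ => (one_div_pos.2 (hpos t)).le
  have hnum0 := (mul_nonneg hlam (intervalIntegral.integral_nonneg hb fun t _ =>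
    mul_nonneg (sq_nonneg t) (hf0 t))).trans hnum
  exact (div_le_div₀ hnum0 hnum (by have := hpos x; positivity) hden).trans
    (le_add_of_nonneg_right hinv)

theorem le_TsrptMean (hf0 : ∀ t, 0 ≤ f t) (hfz : ∀ t ≤ 0, f t = 0) (hf : Integrable f)
    (hf1 : Integrable fun t => t * f t) (hf2 : Integrable fun t => t ^ 2 * f t)
    (hm : m = tailFirstMoment f 0) (hlam : 0 ≤ lam) (hlamm : lam * m < 1) {b : ℝ}
    (hb : 0 ≤ b) :
    lam * (∫ t in (0:ℝ)..b, t ^ 2 * f t) / (2 * (1 - rhoLe f lam b) ^ 2) * tailS f b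
      ≤ TsrptMean f lam := by
  have hint := integrableOn_Tsrpt1_mul hf0 hfz hf hf1 hf2 hm hlam hlamm
  set c := lam * (∫ t in (0:ℝ)..b, t ^ 2 * f t) / (2 * (1 - rhoLe f lam b) ^ 2)
  calc c * tailS f b = ∫ x in Ioi b, c * f x := (integral_const_mul _ _).symm
    _ ≤ ∫ x in Ioi b, Tsrpt1 f lam x * f x :=
        setIntegral_mono_on (hf.integrableOn.const_mul _) (hint.mono_set (Ioi_subset_Ioi hb))
          measurableSet_Ioi fun x hx => mul_le_mul_of_nonneg_right
            (le_Tsrpt1 hf0 hfz hf hf1 hm hlam hlamm hb (le_of_lt hx)) (hf0 x)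
    _ ≤ TsrptMean f lam :=
        setIntegral_mono_set hint (ae_restrict_of_forall_mem measurableSet_Ioi fun x hx =>
          mul_nonneg (Tsrpt1_nonneg hf0 hfz hf1 hm hlam hlamm (le_of_lt hx)) (hf0 x))
          (Ioi_subset_Ioi hb).eventuallyLE

theorem tailFirstMoment_pos (hf0 : ∀ t, 0 ≤ f t) (hf : Integrable f)
    (hf1 : Integrable fun t => t * f t) {x : ℝ} (hx : 0 < x) (hFx : 0 < tailS f x) :
    0 < tailFirstMoment f x := by
  have h := pow_mul_setIntegral_Ioi_le hf0 hx.le 1 hf.integrableOn (by simpa using hf1.integrableOn)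
  simp only [pow_one] at h
  exact (mul_pos hx hFx).trans_le h

theorem eventually_intervalIntegral_sq_mul_pos (hf0 : ∀ t, 0 ≤ f t) (hf : Integrable f)
    (hf2 : Integrable fun t => t ^ 2 * f t) (hF1 : 0 < tailS f 1) :
    ∀ᶠ a in atTop, 0 < ∫ t in (0:ℝ)..a, t ^ 2 * f t := by
  have h := intervalIntegral_sq_mul_add_sq_mul_tailS_le hf0 hf hf2 zero_le_one
  have h01 : 0 ≤ ∫ t in (0:ℝ)..1, t ^ 2 * f t :=
    intervalIntegral.integral_nonneg zero_le_one fun t _ => mul_nonneg (sq_nonneg t) (hf0 t)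
  exact (intervalIntegral_tendsto_integral_Ioi 0 hf2.integrableOn tendsto_id).eventually
    (eventually_gt_nhds (by linarith))

end Queue

section PotterMoments

variable {f : ℝ → ℝ} {C α x₀ : ℝ}

theorem TailPotterBound.integrable_sq_mul (hP : TailPotterBound f C α x₀)
    (hf0 : ∀ t, 0 ≤ f t) (hfz : ∀ t ≤ 0, f t = 0) (hf : Integrable f) (hx₀ : 0 < x₀)
    (hα : 2 < α) : Integrable fun t => t ^ 2 * f t := by
  have h := (integrableOn_pow_mul_Ioc hf 2 0 x₀).union
    (hP.integrableOn_Ioi_pow_mul_and_setIntegral_le hf0 hf hx₀ (p := 2) (by exact_mod_cast hα)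
      le_rfl).1
  rw [Ioc_union_Ioi_eq_Ioi hx₀.le] at h
  exact h.integrable_of_forall_notMem_eq_zero fun t ht => by rw [hfz t (not_lt.1 ht), mul_zero]

theorem TailPotterBound.tailFirstMoment_le (hP : TailPotterBound f C α x₀)
    (hf0 : ∀ t, 0 ≤ f t) (hf : Integrable f) (hx₀ : 0 < x₀) (hα : 1 < α) {b : ℝ}
    (hb : x₀ ≤ b) :
    tailFirstMoment f b ≤ 2 * C / (1 - (2:ℝ) ^ (1 - α)) * b * tailS f b := by
  have h := (hP.integrableOn_Ioi_pow_mul_and_setIntegral_le hf0 hf hx₀ (p := 1)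
    (by exact_mod_cast hα) hb).2
  simp only [pow_one, Nat.cast_one] at h
  calc tailFirstMoment f b ≤ 2 * b * (C * tailS f b) / (1 - (2:ℝ) ^ (1 - α)) := h
    _ = _ := by ring

theorem TailPotterBound.tailFirstMoment_le_rpow (hP : TailPotterBound f C α x₀)
    (hf0 : ∀ t, 0 ≤ f t) (hf : Integrable f) (hC : 0 ≤ C) (hx₀ : 0 < x₀) (hα : 1 < α)
    {b : ℝ} (hb : x₀ ≤ b) :
    tailFirstMoment f b
      ≤ 2 * C / (1 - (2:ℝ) ^ (1 - α)) * (C * x₀ ^ α * tailS f x₀) * b ^ (-(α - 1)) := by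
  have hb0 : 0 < b := hx₀.trans_le hb
  have hr : 0 < 1 - (2:ℝ) ^ (1 - α) :=
    sub_pos.2 (Real.rpow_lt_one_of_one_lt_of_neg one_lt_two (by linarith))
  have hK : 0 ≤ 2 * C / (1 - (2:ℝ) ^ (1 - α)) * b := by positivity
  calc tailFirstMoment f b ≤ 2 * C / (1 - (2:ℝ) ^ (1 - α)) * b * tailS f b :=
        hP.tailFirstMoment_le hf0 hf hx₀ hα hb
    _ ≤ 2 * C / (1 - (2:ℝ) ^ (1 - α)) * b * (C * x₀ ^ α * tailS f x₀ * b ^ (-α)) :=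
        mul_le_mul_of_nonneg_left (hP.tailS_le_rpow hx₀ hb) hK
    _ = _ := by
        rw [neg_sub, Real.rpow_sub hb0, Real.rpow_one, Real.rpow_neg hb0.le]
        field_simp

end PotterMoments

section HeavyTraffic

variable {f : ℝ → ℝ} {m lam C α x₀ : ℝ}

theorem le_TsrptMean_of_mul_tailFirstMoment_eq (hf0 : ∀ t, 0 ≤ f t) (hfz : ∀ t ≤ 0, f t = 0)
    (hf : Integrable f) (hf1 : Integrable fun t => t * f t)
    (hf2 : Integrable fun t => t ^ 2 * f t) (hm : m = tailFirstMoment f 0) (hlam : 0 < lam)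
    (hlamm : lam * m < 1) {K a b : ℝ} (hK : 0 < K) (ha : 0 < a) (hab : a ≤ b)
    (hGb : lam * tailFirstMoment f b = 1 - lam * m)
    (hKb : tailFirstMoment f b ≤ K * b * tailS f b) :
    (∫ t in (0:ℝ)..a, t ^ 2 * f t) / (8 * K * (b * (1 - lam * m))) ≤ TsrptMean f lam := by
  have hb : 0 < b := ha.trans_le hab
  have hδ : 0 < 1 - lam * m := by linarith
  have hρb : 1 - rhoLe f lam b = 2 * (1 - lam * m) := by
    rw [one_sub_rhoLe_eq hf1 hm, hGb]
    ring
  have hIa : 0 ≤ ∫ t in (0:ℝ)..a, t ^ 2 * f t :=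
    intervalIntegral.integral_nonneg ha.le fun t _ => mul_nonneg (sq_nonneg t) (hf0 t)
  have hIab : ∫ t in (0:ℝ)..a, t ^ 2 * f t ≤ ∫ t in (0:ℝ)..b, t ^ 2 * f t :=
    intervalIntegral.integral_mono_interval le_rfl ha.le hab
      (.of_forall fun t => mul_nonneg (sq_nonneg t) (hf0 t))
      ⟨integrableOn_pow_mul_Ioc hf 2 0 b, integrableOn_pow_mul_Ioc hf 2 b 0⟩
  have hδF : 1 - lam * m ≤ lam * K * b * tailS f b := by
    rw [← hGb, mul_assoc lam, mul_assoc lam]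
    exact mul_le_mul_of_nonneg_left (by linarith) hlam.le
  have hT := le_TsrptMean hf0 hfz hf hf1 hf2 hm hlam.le hlamm hb.le
  rw [hρb] at hT
  calc (∫ t in (0:ℝ)..a, t ^ 2 * f t) / (8 * K * (b * (1 - lam * m)))
      = (∫ t in (0:ℝ)..a, t ^ 2 * f t) * (1 - lam * m) / (8 * K * b * (1 - lam * m) ^ 2) := by
        field_simp
    _ ≤ (∫ t in (0:ℝ)..a, t ^ 2 * f t) * (lam * K * b * tailS f b)
          / (8 * K * b * (1 - lam * m) ^ 2) := by gcongr
    _ = lam * (∫ t in (0:ℝ)..a, t ^ 2 * f t) / (2 * (2 * (1 - lam * m)) ^ 2) * tailS f b := by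
        field_simp
        ring
    _ ≤ lam * (∫ t in (0:ℝ)..b, t ^ 2 * f t) / (2 * (2 * (1 - lam * m)) ^ 2) * tailS f b := by
        have := tailS_nonneg hf0 b
        gcongr
    _ ≤ TsrptMean f lam := hT

theorem rpow_le_TsrptMean_of_mul_tailFirstMoment_eq (hf0 : ∀ t, 0 ≤ f t)
    (hfz : ∀ t ≤ 0, f t = 0) (hf : Integrable f) (hf1 : Integrable fun t => t * f t)
    (hf2 : Integrable fun t => t ^ 2 * f t) (hm : m = tailFirstMoment f 0) (hm0 : 0 < m)
    (hlam : 0 < lam) (hlamm : lam * m < 1) {K A β a b : ℝ} (hK : 0 < K) (hβ : 0 < β)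
    (ha : 0 < a) (hab : a ≤ b) (hGb : lam * tailFirstMoment f b = 1 - lam * m)
    (hKb : tailFirstMoment f b ≤ K * b * tailS f b)
    (hAb : tailFirstMoment f b ≤ A * b ^ (-β)) :
    (∫ t in (0:ℝ)..a, t ^ 2 * f t) / (8 * K * (A / m) ^ β⁻¹)
        * (1 - lam * m) ^ (-(1 - β⁻¹)) ≤ TsrptMean f lam := by
  have hb : 0 < b := ha.trans_le hab
  have hδ : 0 < 1 - lam * m := by linarith
  have hbδ : b * (1 - lam * m) ≤ (A / m) ^ β⁻¹ * (1 - lam * m) ^ (1 - β⁻¹) :=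
    mul_le_rpow_of_le_mul_rpow_neg hb hδ hβ <|
      calc 1 - lam * m = lam * tailFirstMoment f b := hGb.symm
        _ ≤ m⁻¹ * (A * b ^ (-β)) :=
          mul_le_mul (by rw [← one_div, le_div_iff₀ hm0]; exact hlamm.le) hAb
            (tailFirstMoment_nonneg hf0 hfz b) (by positivity)
        _ = A / m * b ^ (-β) := by ring
  have hIa : 0 ≤ ∫ t in (0:ℝ)..a, t ^ 2 * f t :=
    intervalIntegral.integral_nonneg ha.le fun t _ => mul_nonneg (sq_nonneg t) (hf0 t)
  calc (∫ t in (0:ℝ)..a, t ^ 2 * f t) / (8 * K * (A / m) ^ β⁻¹)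
          * (1 - lam * m) ^ (-(1 - β⁻¹))
      = (∫ t in (0:ℝ)..a, t ^ 2 * f t)
          / (8 * K * ((A / m) ^ β⁻¹ * (1 - lam * m) ^ (1 - β⁻¹))) := by
        rw [Real.rpow_neg hδ.le]
        field_simp
    _ ≤ (∫ t in (0:ℝ)..a, t ^ 2 * f t) / (8 * K * (b * (1 - lam * m))) := by gcongr
    _ ≤ TsrptMean f lam :=
        le_TsrptMean_of_mul_tailFirstMoment_eq hf0 hfz hf hf1 hf2 hm hlam hlamm hK ha hab hGb hKb

theorem exists_rpow_le_TsrptMean (hf0 : ∀ t, 0 ≤ f t) (hfz : ∀ t ≤ 0, f t = 0)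
    (hf : Integrable f) (hf1 : Integrable fun t => t * f t)
    (hf2 : Integrable fun t => t ^ 2 * f t) (hm : m = tailFirstMoment f 0) (hm0 : 0 < m)
    (hunb : ∀ x > 0, 0 < tailS f x) (hP : TailPotterBound f C α x₀) (hC : 0 < C)
    (hx₀ : 0 < x₀) (hα : 2 < α) :
    ∃ c > (0:ℝ), ∃ κ > (0:ℝ), ∀ᶠ lam in 𝓝[<] (1 / m),
      c * (1 - lam * m) ^ (-κ) ≤ TsrptMean f lam := by
  set K := 2 * C / (1 - (2:ℝ) ^ (1 - α))
  set A := K * (C * x₀ ^ α * tailS f x₀)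
  have hK : 0 < K := div_pos (by positivity)
    (sub_pos.2 (Real.rpow_lt_one_of_one_lt_of_neg one_lt_two (by linarith)))
  have hA : 0 < A := by
    have := hunb x₀ hx₀
    positivity
  obtain ⟨a, hIa, hax₀⟩ := ((eventually_intervalIntegral_sq_mul_pos hf0 hf hf2
    (hunb 1 one_pos)).and (eventually_ge_atTop x₀)).exists
  have ha : 0 < a := hx₀.trans_le hax₀
  have hGa := tailFirstMoment_pos hf0 hf hf1 ha (hunb a ha)
  refine ⟨(∫ t in (0:ℝ)..a, t ^ 2 * f t) / (8 * K * (A / m) ^ (α - 1)⁻¹), by positivity,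
    1 - (α - 1)⁻¹, sub_pos.2 (inv_lt_one_of_one_lt₀ (by linarith)), ?_⟩
  have hnear : ∀ᶠ lam in 𝓝 (1 / m), 0 < lam ∧ 1 - lam * m < lam * tailFirstMoment f a :=
    (eventually_gt_nhds (by positivity)).and (ContinuousAt.eventually_lt (by fun_prop)
      (by fun_prop) (show 1 - 1 / m * m < 1 / m * tailFirstMoment f a by
        rw [one_div_mul_cancel hm0.ne', sub_self]
        positivity))
  filter_upwards [nhdsWithin_le_nhds hnear, self_mem_nhdsWithin]
    with lam ⟨hlam, hlamG⟩ (hlam1 : lam < 1 / m)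
  have hlamm : lam * m < 1 := (lt_div_iff₀ hm0).1 hlam1
  have hδ : 0 < 1 - lam * m := by linarith
  obtain ⟨b, hab, hb⟩ := exists_ge_eq_of_tendsto_atTop_zero (continuous_setIntegral_Ioi hf1)
    (tendsto_setIntegral_Ioi_atTop hf1) (div_pos hδ hlam) ((div_le_iff₀' hlam).2 hlamG.le)
  have hGb : lam * tailFirstMoment f b = 1 - lam * m := by
    rw [tailFirstMoment, hb]
    field_simp
  have hbx₀ := hax₀.trans hab
  exact rpow_le_TsrptMean_of_mul_tailFirstMoment_eq hf0 hfz hf hf1 hf2 hm hm0 hlam hlamm hK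
    (by linarith) ha hab hGb (hP.tailFirstMoment_le hf0 hf hx₀ (by linarith) hbx₀)
    (hP.tailFirstMoment_le_rpow hf0 hf hC.le hx₀ (by linarith) hbx₀)

end HeavyTraffic

theorem log_over_Tsrpt1_tendsto_zero_unbounded_general
    (f : ℝ → ℝ) (m : ℝ)
    (hf_nonneg : ∀ x, 0 ≤ f x)
    (hf_zero : ∀ x ≤ 0, f x = 0)
    (hf_prob : ∫ t in Set.Ioi (0:ℝ), f t = 1)
    (hm_int : Integrable (fun t => t * f t) (volume.restrict (Set.Ioi 0)))
    (hm_def : m = ∫ t in Set.Ioi (0:ℝ), t * f t)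
    (hm_pos : 0 < m)
    (hunbounded : ∀ x > (0:ℝ), 0 < tailS f x)
    (hmatuszewska : ∃ C > (0:ℝ), ∃ ε > (0:ℝ), ∃ x₀ > (0:ℝ),
      ∀ x ≥ x₀, ∀ γ ≥ (1:ℝ), tailS f (γ * x) ≤ C * γ ^ (-(2 + ε)) * tailS f x) :
    Tendsto (fun lam => Real.log (1 / (1 - lam * m)) / TsrptMean f lam)
      (nhdsWithin (1/m) (Set.Iio (1/m))) (nhds 0) := by
  obtain ⟨C, hC, ε, hε, x₀, hx₀, hP⟩ := hmatuszewska
  have hf : Integrable f := IntegrableOn.integrable_of_forall_notMem_eq_zero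
    (integrable_of_integral_eq_one hf_prob) fun t ht => hf_zero t (not_lt.1 ht)
  have hf1 : Integrable fun t => t * f t := IntegrableOn.integrable_of_forall_notMem_eq_zero
    hm_int fun t ht => by rw [hf_zero t (not_lt.1 ht), mul_zero]
  have hf2 := TailPotterBound.integrable_sq_mul hP hf_nonneg hf_zero hf hx₀ (by linarith)
  obtain ⟨c, hc, κ, hκ, hT⟩ := exists_rpow_le_TsrptMean hf_nonneg hf_zero hf hf1 hf2 hm_def
    hm_pos hunbounded hP hC hx₀ (by linarith : 2 < 2 + ε)
  exact tendsto_log_one_div_div_of_rpow_le hc hκ (tendsto_one_sub_mul_nhdsGT_zero hm_pos) hT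

/-- **Lemma 6.2, unbounded case.** If `S` is unbounded with tail of upper
Matuszewska index less than `−2` (Potter-type bound), then
`lim_{λ → (1/m)⁻} ln(1/(1−λm)) / T̄(λ) = 0`. -/
theorem log_over_Tsrpt1_tendsto_zero_unbounded
    (f : ℝ → ℝ) (m : ℝ)
    (hf_meas : Measurable f)
    (hf_nonneg : ∀ x, 0 ≤ f x)
    (hf_zero : ∀ x ≤ 0, f x = 0)
    (hf_prob : ∫ t in Set.Ioi (0:ℝ), f t = 1)
    (hm_int : Integrable (fun t => t * f t) (volume.restrict (Set.Ioi 0)))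
    (hm_def : m = ∫ t in Set.Ioi (0:ℝ), t * f t)
    (hm_pos : 0 < m)
    (hunbounded : ∀ x > (0:ℝ), 0 < tailS f x)
    (hmatuszewska : ∃ C > (0:ℝ), ∃ ε > (0:ℝ), ∃ x₀ > (0:ℝ),
      ∀ x ≥ x₀, ∀ γ ≥ (1:ℝ), tailS f (γ * x) ≤ C * γ ^ (-(2 + ε)) * tailS f x) :
    Tendsto (fun lam => Real.log (1 / (1 - lam * m)) / TsrptMean f lam)
      (nhdsWithin (1/m) (Set.Iio (1/m))) (nhds 0) :=
  log_over_Tsrpt1_tendsto_zero_unbounded_general f m hf_nonneg hf_zero hf_prob hm_int hm_def hm_pos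
    hunbounded hmatuszewska
end

section
/- (Heavy-traffic growth rate for bounded job sizes, used in Appendix C.) If S is bounded, i.e. there exists B > 0 such that f vanishes almost everywhere on (B,∞), then the M/G/1 SRPT mean response time satisfies T̄(λ) = Θ(1/(1−ρ)) in heavy traffic: there exist constants 0 < c ≤ C and λ₀ ∈ (0, 1/m) such that for all λ ∈ (λ₀, 1/m), c/(1−λm) ≤ T̄(λ) ≤ C/(1−λm). -/
/-!
Write `ρ = λm` and `ρₓ = ρ_{≤x}`. Bounded sizes have a finite second moment `M₂`, and Schrage's
numerator is at most `λM₂`, so `T̄(λ) ≤ (λM₂/2) ∫ f(x)/(1-ρₓ)² dx + m/(1-ρ)`. Below a point `a`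
with `ρ_a ≤ 1/2` the weight `1/(1-ρₓ)²` is at most `4`; above it `f(x) ≤ x f(x)/a`, and
`∫ λ x f(x)/(1-ρₓ)² dx = 1/(1-ρ) - 1` because `dρₓ = λ x f(x) dx`: this is the fundamental theorem
of calculus for the absolutely continuous function `x ↦ 1/(1-ρₓ)`.

For the lower bound take `x₁` with `1 - ρ_{x₁} = 2(1-ρ)`. Beyond `x₁` the denominator of
Schrage's first term is at most `8(1-ρ)²`, its numerator at least `λ(m/2)²` by Cauchy–Schwarz,
and the mass of `f` beyond `x₁` is at least `(1-ρ)/(λB)` since `λ∫_{x₁}^∞ t f(t) dt = 1-ρ`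
and `t ≤ B` there.
-/

open MeasureTheory

open Set Filter
open scoped NNReal

theorem LipschitzOnWith.comp_absolutelyContinuousOnInterval {X Y : Type*}
    [PseudoMetricSpace X] [PseudoMetricSpace Y] {φ : X → Y} {K : ℝ≥0} {s : Set X}
    {P : ℝ → X} {a b : ℝ} (hφ : LipschitzOnWith K φ s)
    (hP : AbsolutelyContinuousOnInterval P a b) (hPs : MapsTo P (uIcc a b) s) :
    AbsolutelyContinuousOnInterval (φ ∘ P) a b := by
  have hK := Tendsto.const_mul (K : ℝ) hP
  rw [mul_zero] at hK
  refine squeeze_zero' (Eventually.of_forall fun _ ↦ Finset.sum_nonneg fun _ _ ↦ dist_nonneg)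
    ?_ hK
  filter_upwards [mem_inf_of_right (mem_principal_self _)] with E hE
  rw [Finset.mul_sum]
  gcongr with i hi
  exact hφ.dist_le_mul _ (hPs (hE.1 i hi).1) _ (hPs (hE.1 i hi).2)

theorem AbsolutelyContinuousOnInterval.integral_comp_mul_deriv {P φ φ' : ℝ → ℝ} {s : Set ℝ}
    {K : ℝ≥0} {a b : ℝ} (hP : AbsolutelyContinuousOnInterval P a b)
    (hPs : MapsTo P (uIcc a b) s) (hφ : LipschitzOnWith K φ s)
    (hφ' : ∀ y ∈ s, HasDerivAt φ (φ' y) y) :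
    ∫ x in a..b, φ' (P x) * deriv P x = φ (P b) - φ (P a) := by
  rw [← Function.comp_apply (f := φ), ← Function.comp_apply (f := φ) (x := a),
    ← (hφ.comp_absolutelyContinuousOnInterval hP hPs).integral_deriv_eq_sub]
  refine intervalIntegral.integral_congr_ae ?_
  filter_upwards [hP.ae_differentiableAt] with x hx hxab
  have hx' := uIoc_subset_uIcc hxab
  exact ((hφ' _ (hPs hx')).comp x (hx hx').hasDerivAt).deriv.symm

theorem lipschitzOnWith_inv_one_sub {c : ℝ} (hc : c < 1) :
    LipschitzOnWith (((1 - c) ^ 2)⁻¹).toNNReal (fun y : ℝ ↦ (1 - y)⁻¹) (Iic c) := by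
  refine LipschitzOnWith.of_dist_le_mul fun x hx y hy ↦ ?_
  have hc' : 0 < 1 - c := by linarith
  have hx' : 1 - c ≤ 1 - x := by linarith [mem_Iic.mp hx]
  have hy' : 1 - c ≤ 1 - y := by linarith [mem_Iic.mp hy]
  have hx0 : 0 < 1 - x := hc'.trans_le hx'
  have hy0 : 0 < 1 - y := hc'.trans_le hy'
  have hxy : (1 - c) ^ 2 ≤ (1 - x) * (1 - y) := by
    rw [sq]; exact mul_le_mul hx' hy' hc'.le hx0.le
  rw [Real.coe_toNNReal _ (by positivity), Real.dist_eq, Real.dist_eq,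
    inv_sub_inv hx0.ne' hy0.ne', show 1 - y - (1 - x) = x - y by ring, abs_div,
    abs_of_pos (mul_pos hx0 hy0), div_eq_inv_mul]
  exact mul_le_mul_of_nonneg_right (inv_anti₀ (by positivity) hxy) (abs_nonneg _)

theorem integral_div_one_sub_primitive_sq {p : ℝ → ℝ} {a b c : ℝ}
    (hp : IntervalIntegrable p volume a b) (hc : c < 1)
    (hPc : ∀ x ∈ uIcc a b, ∫ t in a..x, p t ≤ c) :
    ∫ x in a..b, p x / (1 - ∫ t in a..x, p t) ^ 2 = (1 - ∫ t in a..b, p t)⁻¹ - 1 := by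
  have hP := hp.absolutelyContinuousOnInterval_intervalIntegral left_mem_uIcc
  have hchain := hP.integral_comp_mul_deriv (fun x hx ↦ mem_Iic.mpr (hPc x hx))
    (lipschitzOnWith_inv_one_sub hc) (φ' := fun y ↦ ((1 - y) ^ 2)⁻¹) fun y hy ↦ by
      have h1 : 1 - y ≠ 0 := by linarith [mem_Iic.mp hy]
      exact ((hasDerivAt_inv h1).comp y ((hasDerivAt_id y).const_sub 1)).congr_deriv (by ring)
  rw [intervalIntegral.integral_same, sub_zero, inv_one] at hchain
  rw [← hchain]
  refine intervalIntegral.integral_congr_ae ?_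
  filter_upwards [hp.ae_hasDerivAt_integral] with x hx hxab
  rw [(hx (uIoc_subset_uIcc hxab) a left_mem_uIcc).deriv, div_eq_mul_inv, mul_comm]

theorem setIntegral_Ioi_div_one_sub_primitive_sq_le {p : ℝ → ℝ} {a : ℝ} (hp : Integrable p)
    (hp0 : ∀ x ∈ Ioi a, 0 ≤ p x) (h1 : ∫ t in Ioi a, p t < 1) :
    ∫ x in Ioi a, p x / (1 - ∫ t in a..x, p t) ^ 2 ≤ (1 - ∫ t in Ioi a, p t)⁻¹ := by
  set ρ := ∫ t in Ioi a, p t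
  have hP : ∀ x, a ≤ x → 0 ≤ ∫ t in a..x, p t ∧ ∫ t in a..x, p t ≤ ρ := fun x hx ↦ by
    have hsplit := intervalIntegral.integral_interval_add_Ioi (a := a) (b := x)
      hp.integrableOn hp.integrableOn
    have htail : 0 ≤ ∫ t in Ioi x, p t :=
      setIntegral_nonneg measurableSet_Ioi fun t ht ↦ hp0 t (hx.trans_lt ht)
    refine ⟨?_, by linarith⟩
    rw [intervalIntegral.integral_of_le hx]
    exact setIntegral_nonneg measurableSet_Ioc fun t ht ↦ hp0 t ht.1
  have hint : IntegrableOn (fun x ↦ p x / (1 - ∫ t in a..x, p t) ^ 2) (Ioi a) := by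
    refine (hp.integrableOn.const_mul ((1 - ρ) ^ 2)⁻¹).mono'
      (hp.aestronglyMeasurable.div₀ ((continuous_const.sub (hp.continuous_primitive a)).pow 2
        ).aestronglyMeasurable).restrict ?_
    filter_upwards [ae_restrict_mem measurableSet_Ioi] with x hx
    obtain ⟨hP0, hPρ⟩ := hP x (le_of_lt hx)
    rw [Real.norm_eq_abs, abs_of_nonneg (div_nonneg (hp0 x hx) (sq_nonneg _)), div_eq_inv_mul]
    gcongr
    exact hp0 x hx
  refine le_of_tendsto (intervalIntegral_tendsto_integral_Ioi a hint tendsto_id)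
    ((eventually_ge_atTop a).mono fun b hb ↦ ?_)
  rw [id, integral_div_one_sub_primitive_sq hp.intervalIntegrable h1 ?_]
  · obtain ⟨hP0, hPρ⟩ := hP b hb
    have : (1 - ∫ t in a..b, p t)⁻¹ ≤ (1 - ρ)⁻¹ := inv_anti₀ (by linarith) (by linarith)
    linarith
  · intro x hx
    exact (hP x (uIcc_of_le hb ▸ hx).1).2

theorem sq_integral_mul_le_integral_sq_mul {f : ℝ → ℝ} {a b : ℝ} (hab : a ≤ b)
    (hf : IntervalIntegrable f volume a b) (hf0 : ∀ t ∈ Icc a b, 0 ≤ f t)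
    (h1 : ∫ t in a..b, f t ≤ 1) :
    (∫ t in a..b, t * f t) ^ 2 ≤ ∫ t in a..b, t ^ 2 * f t := by
  set G := ∫ t in a..b, t * f t
  have hg : IntervalIntegrable (fun t ↦ t * f t) volume a b := hf.continuousOn_mul continuousOn_id
  have hweighted : ∫ t in a..b, (2 * G * (t * f t) - G ^ 2 * f t) ≤ ∫ t in a..b, t ^ 2 * f t :=
    intervalIntegral.integral_mono_on hab ((hg.const_mul _).sub (hf.const_mul _))
      (hf.continuousOn_mul (continuousOn_pow 2)) fun t ht ↦ by
        nlinarith [mul_nonneg (sq_nonneg (t - G)) (hf0 t ht)]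
  rw [intervalIntegral.integral_sub (hg.const_mul _) (hf.const_mul _),
    intervalIntegral.integral_const_mul, intervalIntegral.integral_const_mul] at hweighted
  nlinarith [mul_le_of_le_one_right (sq_nonneg G) h1]

theorem integrable_sq_mul_of_ae_eq_zero {f : ℝ → ℝ} {B : ℝ} (hf0 : ∀ t, 0 ≤ f t)
    (hfz : ∀ t ≤ 0, f t = 0) (hf : AEStronglyMeasurable f) (hg : Integrable fun t ↦ t * f t)
    (hfB : ∀ᵐ t, B < t → f t = 0) : Integrable fun t ↦ t ^ 2 * f t := by
  refine (hg.const_mul B).mono' ((continuous_pow 2).aestronglyMeasurable.mul hf) ?_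
  filter_upwards [hfB] with t ht
  rw [Real.norm_of_nonneg (mul_nonneg (sq_nonneg t) (hf0 t))]
  rcases le_or_gt t 0 with ht0 | ht0
  · simp [hfz t ht0]
  rcases le_or_gt t B with htB | htB
  · have := mul_le_mul_of_nonneg_right htB (mul_nonneg ht0.le (hf0 t))
    linarith [show t ^ 2 * f t = t * (t * f t) by ring]
  · simp [ht htB]

structure IsServiceDensity (f : ℝ → ℝ) : Prop where
  nonneg : ∀ x, 0 ≤ f x
  eq_zero_of_nonpos : ∀ x ≤ 0, f x = 0
  integrable : Integrable f
  integral_Ioi : ∫ t in Ioi 0, f t = 1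
  integrable_mul : Integrable fun t ↦ t * f t
  integrable_sq_mul : Integrable fun t ↦ t ^ 2 * f t

namespace IsServiceDensity

variable {f : ℝ → ℝ} {lam m x : ℝ}

theorem mul_apply_nonneg (hS : IsServiceDensity f) (t : ℝ) : 0 ≤ t * f t := by
  rcases le_or_gt t 0 with ht | ht
  · simp [hS.eq_zero_of_nonpos t ht]
  · exact mul_nonneg ht.le (hS.nonneg t)

theorem intervalIntegral_le_one (hS : IsServiceDensity f) (x : ℝ) :
    ∫ t in 0..x, f t ≤ 1 := by
  rw [← hS.integral_Ioi, ← intervalIntegral.integral_interval_add_Ioi hS.integrable.integrableOn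
    hS.integrable.integrableOn, le_add_iff_nonneg_right]
  exact setIntegral_nonneg measurableSet_Ioi fun t _ ↦ hS.nonneg t

theorem continuous_rhoLe (hS : IsServiceDensity f) (lam : ℝ) : Continuous (rhoLe f lam) :=
  continuous_const.mul (hS.integrable_mul.continuous_primitive 0)

theorem rhoLe_add_mul_integral_Ioi (hS : IsServiceDensity f) (lam x : ℝ) :
    rhoLe f lam x + lam * ∫ t in Ioi x, t * f t = lam * ∫ t in Ioi 0, t * f t := by
  rw [rhoLe, ← mul_add, intervalIntegral.integral_interval_add_Ioi
    hS.integrable_mul.integrableOn hS.integrable_mul.integrableOn]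

theorem rhoLe_le (hS : IsServiceDensity f) (hm : m = ∫ t in Ioi 0, t * f t) (hlam : 0 ≤ lam)
    (x : ℝ) : rhoLe f lam x ≤ lam * m := by
  have := hS.rhoLe_add_mul_integral_Ioi lam x
  have : 0 ≤ lam * ∫ t in Ioi x, t * f t := mul_nonneg hlam (integral_nonneg hS.mul_apply_nonneg)
  rw [hm]; linarith

theorem rhoLe_mono (hS : IsServiceDensity f) (hlam : 0 ≤ lam) : Monotone (rhoLe f lam) := by
  intro x y hxy
  have hsplit := intervalIntegral.integral_add_adjacent_intervals
    (hS.integrable_mul.intervalIntegrable (a := 0) (b := x))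
    (hS.integrable_mul.intervalIntegrable (a := x) (b := y))
  have := intervalIntegral.integral_nonneg_of_forall (μ := volume) hxy hS.mul_apply_nonneg
  exact mul_le_mul_of_nonneg_left (by linarith) hlam

theorem one_sub_rhoLe_pos (hS : IsServiceDensity f) (hm : m = ∫ t in Ioi 0, t * f t)
    (hlam : 0 ≤ lam) (hρ : lam * m < 1) (x : ℝ) : 0 < 1 - rhoLe f lam x := by
  linarith [hS.rhoLe_le hm hlam x]

theorem integral_sq_mul_add_sq_mul_tailS_le (hS : IsServiceDensity f) (hx : 0 ≤ x) :
    (∫ t in 0..x, t ^ 2 * f t) + x ^ 2 * tailS f x ≤ ∫ t in Ioi 0, t ^ 2 * f t := by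
  rw [← intervalIntegral.integral_interval_add_Ioi (b := x) hS.integrable_sq_mul.integrableOn
    hS.integrable_sq_mul.integrableOn, tailS, ← integral_const_mul]
  gcongr _ + ?_
  refine setIntegral_mono_on (hS.integrable.const_mul _).integrableOn
    hS.integrable_sq_mul.integrableOn measurableSet_Ioi fun t ht ↦ ?_
  gcongr
  · exact hS.nonneg t
  · exact (mem_Ioi.mp ht).le

theorem continuous_one_div_one_sub_rhoLe (hS : IsServiceDensity f)
    (hm : m = ∫ t in Ioi 0, t * f t) (hlam : 0 ≤ lam) (hρ : lam * m < 1) :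
    Continuous fun t ↦ 1 / (1 - rhoLe f lam t) :=
  continuous_const.div (continuous_const.sub (hS.continuous_rhoLe lam))
    fun t ↦ (hS.one_sub_rhoLe_pos hm hlam hρ t).ne'

theorem Tsrpt1_le (hS : IsServiceDensity f) (hm : m = ∫ t in Ioi 0, t * f t) (hlam : 0 ≤ lam)
    (hρ : lam * m < 1) (hx : 0 ≤ x) :
    Tsrpt1 f lam x ≤ lam * (∫ t in Ioi 0, t ^ 2 * f t) / (2 * (1 - rhoLe f lam x) ^ 2)
      + x / (1 - lam * m) := by
  rw [Tsrpt1, mul_assoc, ← mul_add]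
  gcongr ?_ / _ + ?_
  · exact mul_le_mul_of_nonneg_left (hS.integral_sq_mul_add_sq_mul_tailS_le hx) hlam
  · calc ∫ t in 0..x, 1 / (1 - rhoLe f lam t)
        ≤ ∫ t in 0..x, 1 / (1 - lam * m) :=
          intervalIntegral.integral_mono_on hx
            ((hS.continuous_one_div_one_sub_rhoLe hm hlam hρ).intervalIntegrable _ _)
            intervalIntegrable_const fun t _ ↦
              one_div_le_one_div_of_le (by linarith) (by linarith [hS.rhoLe_le hm hlam t])
      _ = x / (1 - lam * m) := by simp [div_eq_mul_inv]

theorem mul_intervalIntegral_div_le_Tsrpt1 (hS : IsServiceDensity f)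
    (hm : m = ∫ t in Ioi 0, t * f t) (hlam : 0 ≤ lam) (hρ : lam * m < 1) (hx : 0 ≤ x) :
    lam * (∫ t in 0..x, t ^ 2 * f t) / (2 * (1 - rhoLe f lam x) ^ 2) ≤ Tsrpt1 f lam x := by
  have htail : 0 ≤ tailS f x := setIntegral_nonneg measurableSet_Ioi fun t _ ↦ hS.nonneg t
  have hR : 0 ≤ ∫ t in 0..x, 1 / (1 - rhoLe f lam t) := intervalIntegral.integral_nonneg hx
    fun t _ ↦ (one_div_pos.2 (hS.one_sub_rhoLe_pos hm hlam hρ t)).le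
  rw [Tsrpt1]
  refine le_add_of_le_of_nonneg (div_le_div_of_nonneg_right ?_ (by positivity)) hR
  exact le_add_of_nonneg_right (mul_nonneg (mul_nonneg hlam (sq_nonneg x)) htail)

theorem Tsrpt1_nonneg (hS : IsServiceDensity f) (hm : m = ∫ t in Ioi 0, t * f t)
    (hlam : 0 ≤ lam) (hρ : lam * m < 1) (hx : 0 ≤ x) : 0 ≤ Tsrpt1 f lam x := by
  refine le_trans ?_ (hS.mul_intervalIntegral_div_le_Tsrpt1 hm hlam hρ hx)
  have := intervalIntegral.integral_nonneg (μ := volume) hx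
    fun t _ ↦ mul_nonneg (sq_nonneg t) (hS.nonneg t)
  positivity

theorem measurable_Tsrpt1 (hS : IsServiceDensity f) (hm : m = ∫ t in Ioi 0, t * f t)
    (hlam : 0 ≤ lam) (hρ : lam * m < 1) : Measurable (Tsrpt1 f lam) := by
  have htail : Measurable (tailS f) := Antitone.measurable fun x y hxy ↦
    setIntegral_mono_set hS.integrable.integrableOn (ae_of_all _ fun t ↦ hS.nonneg t)
      (Ioi_subset_Ioi hxy).eventuallyLE
  have hQ := hS.integrable_sq_mul.continuous_primitive 0
  have hR := intervalIntegral.continuous_primitive (μ := volume)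
    (fun a b ↦ (hS.continuous_one_div_one_sub_rhoLe hm hlam hρ).intervalIntegrable a b) 0
  have hρc := hS.continuous_rhoLe lam
  unfold Tsrpt1
  fun_prop

theorem integrable_div_one_sub_rhoLe_sq (hS : IsServiceDensity f)
    (hm : m = ∫ t in Ioi 0, t * f t) (hlam : 0 ≤ lam) (hρ : lam * m < 1) {g : ℝ → ℝ}
    (hg : Integrable g) : Integrable fun x ↦ g x / (1 - rhoLe f lam x) ^ 2 := by
  refine (hg.norm.const_mul ((1 - lam * m) ^ 2)⁻¹).mono'
    (hg.aestronglyMeasurable.div₀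
      ((continuous_const.sub (hS.continuous_rhoLe lam)).pow 2).aestronglyMeasurable)
    (ae_of_all _ fun x ↦ ?_)
  have hx := hS.one_sub_rhoLe_pos hm hlam hρ x
  rw [norm_div, norm_pow, Real.norm_of_nonneg hx.le, div_eq_inv_mul]
  gcongr
  exact hS.rhoLe_le hm hlam x

theorem integrableOn_Tsrpt1_mul (hS : IsServiceDensity f) (hm : m = ∫ t in Ioi 0, t * f t)
    (hlam : 0 ≤ lam) (hρ : lam * m < 1) :
    IntegrableOn (fun x ↦ Tsrpt1 f lam x * f x) (Ioi 0) := by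
  set M₂ := ∫ t in Ioi 0, t ^ 2 * f t
  have hbound := ((hS.integrable_div_one_sub_rhoLe_sq hm hlam hρ hS.integrable).const_mul
    (lam * M₂ / 2)).add (hS.integrable_mul.const_mul (1 - lam * m)⁻¹)
  refine hbound.integrableOn.mono'
    ((hS.measurable_Tsrpt1 hm hlam hρ).aestronglyMeasurable.mul
      hS.integrable.aestronglyMeasurable).restrict ?_
  filter_upwards [ae_restrict_mem measurableSet_Ioi] with x hx
  rw [Real.norm_of_nonneg (mul_nonneg (hS.Tsrpt1_nonneg hm hlam hρ hx.le) (hS.nonneg x))]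
  calc Tsrpt1 f lam x * f x
      ≤ (lam * M₂ / (2 * (1 - rhoLe f lam x) ^ 2) + x / (1 - lam * m)) * f x :=
        mul_le_mul_of_nonneg_right (hS.Tsrpt1_le hm hlam hρ hx.le) (hS.nonneg x)
    _ = lam * M₂ / 2 * (f x / (1 - rhoLe f lam x) ^ 2) + (1 - lam * m)⁻¹ * (x * f x) := by
        rw [mul_comm 2, ← div_div]; ring

theorem integral_div_one_sub_rhoLe_sq_le (hS : IsServiceDensity f)
    (hm : m = ∫ t in Ioi 0, t * f t) (hlam : 0 < lam) (hρ : lam * m < 1) {a : ℝ} (ha : 0 < a)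
    (hρa : rhoLe f lam a ≤ 1 / 2) :
    ∫ x in Ioi 0, f x / (1 - rhoLe f lam x) ^ 2 ≤ 4 + (a * lam)⁻¹ * (1 - lam * m)⁻¹ := by
  have hload : ∫ x in Ioi 0, lam * (x * f x) / (1 - rhoLe f lam x) ^ 2 ≤ (1 - lam * m)⁻¹ := by
    have := setIntegral_Ioi_div_one_sub_primitive_sq_le (hS.integrable_mul.const_mul lam)
      (fun x _ ↦ mul_nonneg hlam.le (hS.mul_apply_nonneg x)) (by rwa [integral_const_mul, ← hm])
    simp only [intervalIntegral.integral_const_mul, integral_const_mul, ← hm] at this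
    exact this
  have hpt : ∀ x ∈ Ioi (0 : ℝ), f x / (1 - rhoLe f lam x) ^ 2 ≤
      4 * f x + (a * lam)⁻¹ * (lam * (x * f x) / (1 - rhoLe f lam x) ^ 2) := by
    intro x hx
    have hD := hS.one_sub_rhoLe_pos hm hlam.le hρ x
    have hfx := hS.nonneg x
    rcases le_or_gt x a with hxa | hxa
    · have hρx := (hS.rhoLe_mono hlam.le hxa).trans hρa
      have : f x / (1 - rhoLe f lam x) ^ 2 ≤ 4 * f x := by
        have hD2 : 1 / 4 ≤ (1 - rhoLe f lam x) ^ 2 := by nlinarith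
        rw [div_le_iff₀ (by positivity)]
        nlinarith [mul_le_mul_of_nonneg_left hD2 hfx]
      have : 0 ≤ (a * lam)⁻¹ * (lam * (x * f x) / (1 - rhoLe f lam x) ^ 2) := by
        have := hS.mul_apply_nonneg x
        positivity
      linarith
    · have hle : f x / (1 - rhoLe f lam x) ^ 2 ≤ x / a * (f x / (1 - rhoLe f lam x) ^ 2) :=
        le_mul_of_one_le_left (by positivity) ((one_le_div ha).2 hxa.le)
      have e : (a * lam)⁻¹ * (lam * (x * f x) / (1 - rhoLe f lam x) ^ 2)
          = x / a * (f x / (1 - rhoLe f lam x) ^ 2) := by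
        field_simp
      linarith
  have hint := (hS.integrable.const_mul 4).integrableOn (s := Ioi 0)
  have hint' := ((hS.integrable_div_one_sub_rhoLe_sq hm hlam.le hρ
    (hS.integrable_mul.const_mul lam)).const_mul (a * lam)⁻¹).integrableOn (s := Ioi 0)
  calc ∫ x in Ioi 0, f x / (1 - rhoLe f lam x) ^ 2
      ≤ ∫ x in Ioi 0, (4 * f x + (a * lam)⁻¹ * (lam * (x * f x) / (1 - rhoLe f lam x) ^ 2)) :=
        setIntegral_mono_of_nonneg (fun x _ ↦ by have := hS.nonneg x; positivity) hpt
          (hint.add hint')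
    _ = 4 + (a * lam)⁻¹ * ∫ x in Ioi 0, lam * (x * f x) / (1 - rhoLe f lam x) ^ 2 := by
        rw [integral_add hint hint', integral_const_mul, integral_const_mul, hS.integral_Ioi,
          mul_one]
    _ ≤ 4 + (a * lam)⁻¹ * (1 - lam * m)⁻¹ := by gcongr

theorem TsrptMean_le (hS : IsServiceDensity f) (hm : m = ∫ t in Ioi 0, t * f t) (hm0 : 0 < m)
    (hlam : 0 < lam) (hρ : lam * m < 1) {a : ℝ} (ha : 0 < a)
    (hGa : ∫ t in 0..a, t * f t ≤ m / 2) :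
    TsrptMean f lam ≤ (2 * (∫ t in Ioi 0, t ^ 2 * f t) / m
      + (∫ t in Ioi 0, t ^ 2 * f t) / (2 * a) + m) / (1 - lam * m) := by
  set M₂ := ∫ t in Ioi 0, t ^ 2 * f t
  have hM₂ : 0 ≤ M₂ := integral_nonneg fun t ↦ mul_nonneg (sq_nonneg t) (hS.nonneg t)
  have hpos : 0 < 1 - lam * m := by linarith
  have hρa : rhoLe f lam a ≤ 1 / 2 := by
    have := mul_le_mul_of_nonneg_left hGa hlam.le
    rw [rhoLe]; linarith
  have hK := hS.integral_div_one_sub_rhoLe_sq_le hm hlam hρ ha hρa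
  have hint := ((hS.integrable_div_one_sub_rhoLe_sq hm hlam.le hρ hS.integrable).const_mul
    (lam * M₂ / 2)).integrableOn (s := Ioi 0)
  have hint' := (hS.integrable_mul.const_mul (1 - lam * m)⁻¹).integrableOn (s := Ioi 0)
  have hfirst : 2 * lam * M₂ ≤ 2 * M₂ / m / (1 - lam * m) := by
    rw [le_div_iff₀ hpos, le_div_iff₀ hm0]
    nlinarith [mul_nonneg hM₂ (mul_nonneg hlam.le hm0.le), mul_nonneg hM₂ (sq_nonneg (lam * m))]
  calc TsrptMean f lam
      ≤ ∫ x in Ioi 0, (lam * M₂ / 2 * (f x / (1 - rhoLe f lam x) ^ 2)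
          + (1 - lam * m)⁻¹ * (x * f x)) := by
        refine setIntegral_mono_of_nonneg (fun x hx ↦
          mul_nonneg (hS.Tsrpt1_nonneg hm hlam.le hρ (le_of_lt hx)) (hS.nonneg x))
          (fun x hx ↦ ?_) (hint.add hint')
        refine (mul_le_mul_of_nonneg_right (hS.Tsrpt1_le hm hlam.le hρ (le_of_lt hx))
          (hS.nonneg x)).trans_eq ?_
        rw [mul_comm 2, ← div_div]; ring
    _ = lam * M₂ / 2 * (∫ x in Ioi 0, f x / (1 - rhoLe f lam x) ^ 2)
          + (1 - lam * m)⁻¹ * m := by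
        rw [integral_add hint hint', integral_const_mul, integral_const_mul, ← hm]
    _ ≤ lam * M₂ / 2 * (4 + (a * lam)⁻¹ * (1 - lam * m)⁻¹) + (1 - lam * m)⁻¹ * m := by
        gcongr
    _ = 2 * lam * M₂ + (M₂ / (2 * a) + m) / (1 - lam * m) := by
        field_simp
        ring
    _ ≤ _ := by
        rw [add_assoc, add_div (2 * M₂ / m)]
        linarith

theorem le_Tsrpt1_of_half_load_le (hS : IsServiceDensity f) (hm : m = ∫ t in Ioi 0, t * f t)
    (hlam : 0 < lam) (hρ : lam * m < 1) (hx : 0 ≤ x) (hρx : lam * m / 2 ≤ rhoLe f lam x)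
    (hDx : 1 - rhoLe f lam x ≤ 2 * (1 - lam * m)) :
    lam * m ^ 2 / (32 * (1 - lam * m) ^ 2) ≤ Tsrpt1 f lam x := by
  have hm0 : 0 ≤ m := by rw [hm]; exact integral_nonneg hS.mul_apply_nonneg
  have hGx : m / 2 ≤ ∫ t in 0..x, t * f t := by
    rw [rhoLe] at hρx; nlinarith
  have hQx := sq_integral_mul_le_integral_sq_mul hx hS.integrable.intervalIntegrable
    (fun t _ ↦ hS.nonneg t) (hS.intervalIntegral_le_one x)
  have hD := hS.one_sub_rhoLe_pos hm hlam.le hρ x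
  have hpos : 0 < 1 - lam * m := by linarith
  refine le_trans ?_ (hS.mul_intervalIntegral_div_le_Tsrpt1 hm hlam.le hρ hx)
  calc lam * m ^ 2 / (32 * (1 - lam * m) ^ 2)
      = lam * (m / 2) ^ 2 / (2 * (2 * (1 - lam * m)) ^ 2) := by field_simp; ring
    _ ≤ lam * (∫ t in 0..x, t ^ 2 * f t) / (2 * (1 - rhoLe f lam x) ^ 2) :=
        div_le_div₀ (mul_nonneg hlam.le ((sq_nonneg _).trans hQx))
          (mul_le_mul_of_nonneg_left (hQx.trans' (pow_le_pow_left₀ (by positivity) hGx 2))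
            hlam.le)
          (by positivity)
          (mul_le_mul_of_nonneg_left (pow_le_pow_left₀ hD.le hDx 2) zero_le_two)

theorem integral_Ioi_mul_le_mul_tailS (hS : IsServiceDensity f) {B : ℝ}
    (hfB : ∀ᵐ t, B < t → f t = 0) (x : ℝ) : ∫ t in Ioi x, t * f t ≤ B * tailS f x := by
  rw [tailS, ← integral_const_mul]
  refine integral_mono_ae hS.integrable_mul.integrableOn (hS.integrable.const_mul B).integrableOn
    (ae_restrict_of_ae ?_)
  filter_upwards [hfB] with t ht
  rcases le_or_gt t B with htB | htB
  · exact mul_le_mul_of_nonneg_right htB (hS.nonneg t)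
  · simp [ht htB]

theorem exists_intervalIntegral_mul_eq (hS : IsServiceDensity f)
    (hm : m = ∫ t in Ioi 0, t * f t) {B : ℝ} (hB : 0 ≤ B) (hfB : ∀ᵐ t, B < t → f t = 0)
    {y : ℝ} (hy : y ∈ Icc 0 m) : ∃ x ∈ Icc 0 B, ∫ t in 0..x, t * f t = y := by
  have htail : ∫ t in Ioi B, t * f t = 0 := by
    refine integral_eq_zero_of_ae ?_
    filter_upwards [ae_restrict_mem measurableSet_Ioi, ae_restrict_of_ae hfB] with t ht hft
    simp [hft ht]
  have hGB : ∫ t in 0..B, t * f t = m := by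
    rw [hm, ← intervalIntegral.integral_interval_add_Ioi (b := B) hS.integrable_mul.integrableOn
      hS.integrable_mul.integrableOn, htail, add_zero]
  refine intermediate_value_Icc hB (hS.integrable_mul.continuous_primitive 0).continuousOn ?_
  rwa [intervalIntegral.integral_same, hGB]

theorem le_TsrptMean (hS : IsServiceDensity f) (hm : m = ∫ t in Ioi 0, t * f t) {B : ℝ}
    (hB : 0 < B) (hfB : ∀ᵐ t, B < t → f t = 0) (hlam : 0 < lam) (hρ : lam * m < 1)
    (hlam₀ : 2 / 3 ≤ lam * m) : m ^ 2 / (32 * B) / (1 - lam * m) ≤ TsrptMean f lam := by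
  have hpos : 0 < 1 - lam * m := by linarith
  have hy₀ : 1 / lam ≤ 2 * m := by rw [div_le_iff₀ hlam]; linarith
  have hy₁ : m ≤ 1 / lam := by rw [le_div_iff₀ hlam]; linarith
  obtain ⟨x₁, hx₁, hGx₁⟩ := hS.exists_intervalIntegral_mul_eq hm hB.le hfB
    (y := 2 * m - 1 / lam) ⟨by linarith, by linarith⟩
  have hρx₁ : rhoLe f lam x₁ = 2 * (lam * m) - 1 := by
    rw [rhoLe, hGx₁]; field_simp
  have htail : (1 - lam * m) / (lam * B) ≤ tailS f x₁ := by
    have h1 := hS.rhoLe_add_mul_integral_Ioi lam x₁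
    have h2 := mul_le_mul_of_nonneg_left (hS.integral_Ioi_mul_le_mul_tailS hfB x₁) hlam.le
    rw [← hm, hρx₁] at h1
    rw [div_le_iff₀ (by positivity)]
    linarith
  set c := lam * m ^ 2 / (32 * (1 - lam * m) ^ 2) with hc_def
  have hc : 0 ≤ c := by positivity
  have hpt : ∀ x ∈ Ioi x₁, c ≤ Tsrpt1 f lam x := fun x hx ↦ by
    have hρx := hS.rhoLe_mono hlam.le (le_of_lt hx)
    exact hS.le_Tsrpt1_of_half_load_le hm hlam hρ (hx₁.1.trans (le_of_lt hx)) (by linarith)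
      (by linarith)
  have hint := hS.integrableOn_Tsrpt1_mul hm hlam.le hρ
  calc m ^ 2 / (32 * B) / (1 - lam * m) = c * ((1 - lam * m) / (lam * B)) := by
        rw [hc_def]; field_simp
    _ ≤ c * tailS f x₁ := by gcongr
    _ = ∫ x in Ioi x₁, c * f x := (integral_const_mul c _).symm
    _ ≤ ∫ x in Ioi x₁, Tsrpt1 f lam x * f x :=
        setIntegral_mono_on (hS.integrable.const_mul c).integrableOn
          (hint.mono_set (Ioi_subset_Ioi hx₁.1)) measurableSet_Ioi
          fun x hx ↦ mul_le_mul_of_nonneg_right (hpt x hx) (hS.nonneg x)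
    _ ≤ TsrptMean f lam :=
        setIntegral_mono_set hint
          (ae_restrict_of_forall_mem measurableSet_Ioi fun x hx ↦
            mul_nonneg (hS.Tsrpt1_nonneg hm hlam.le hρ (le_of_lt hx)) (hS.nonneg x))
          (Ioi_subset_Ioi hx₁.1).eventuallyLE

end IsServiceDensity

theorem TsrptMean_theta_bounded_general
    (f : ℝ → ℝ) (m : ℝ)
    (hf_nonneg : ∀ x, 0 ≤ f x)
    (hf_zero : ∀ x ≤ 0, f x = 0)
    (hf_prob : ∫ t in Set.Ioi (0:ℝ), f t = 1)
    (hm_int : Integrable (fun t => t * f t) (volume.restrict (Set.Ioi 0)))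
    (hm_def : m = ∫ t in Set.Ioi (0:ℝ), t * f t)
    (hm_pos : 0 < m)
    (hbounded : ∃ B > (0:ℝ), ∀ᵐ x : ℝ, B < x → f x = 0) :
    ∃ c C lam₀ : ℝ, 0 < c ∧ c ≤ C ∧ lam₀ ∈ Set.Ioo 0 (1/m) ∧
      ∀ lam ∈ Set.Ioo lam₀ (1/m),
        c / (1 - lam * m) ≤ TsrptMean f lam ∧
        TsrptMean f lam ≤ C / (1 - lam * m) := by
  obtain ⟨B, hB, hfB⟩ := hbounded
  have hvanish {g : ℝ → ℝ} (hg0 : ∀ x ≤ 0, g x = 0) (hg : IntegrableOn g (Ioi 0)) :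
      Integrable g :=
    hg.integrable_of_forall_notMem_eq_zero fun x hx ↦ hg0 x (not_lt.mp hx)
  have hf : Integrable f :=
    hvanish hf_zero (Integrable.of_integral_ne_zero (by rw [hf_prob]; exact one_ne_zero))
  have hg : Integrable fun t ↦ t * f t := hvanish (fun x hx ↦ by simp [hf_zero x hx]) hm_int
  have hS : IsServiceDensity f := ⟨hf_nonneg, hf_zero, hf, hf_prob, hg,
    integrable_sq_mul_of_ae_eq_zero hf_nonneg hf_zero hf.aestronglyMeasurable hg hfB⟩
  obtain ⟨a, ha, hGa⟩ := hS.exists_intervalIntegral_mul_eq hm_def hB.le hfB (y := m / 2)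
    ⟨by positivity, by linarith⟩
  have ha0 : 0 < a :=
    ha.1.lt_of_ne (by rintro rfl; rw [intervalIntegral.integral_same] at hGa; linarith)
  set M₂ := ∫ t in Ioi 0, t ^ 2 * f t
  refine ⟨m ^ 2 / (32 * B), max (2 * M₂ / m + M₂ / (2 * a) + m) (m ^ 2 / (32 * B)),
    2 / (3 * m), by positivity, le_max_right _ _, ⟨by positivity, ?_⟩, fun lam hlam ↦ ?_⟩
  · rw [div_lt_div_iff₀ (by positivity) hm_pos]; linarith
  have hlam0 : 0 < lam := (by positivity : (0 : ℝ) < 2 / (3 * m)).trans hlam.1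
  have hρ : lam * m < 1 := (lt_div_iff₀ hm_pos).mp hlam.2
  have hρ₀ : 2 / 3 ≤ lam * m := by
    have := (div_lt_iff₀ (by positivity)).mp hlam.1
    linarith
  exact ⟨hS.le_TsrptMean hm_def hB hfB hlam0 hρ hρ₀,
    (hS.TsrptMean_le hm_def hm_pos hlam0 hρ ha0 hGa.le).trans
      (div_le_div_of_nonneg_right (le_max_left _ _) (by linarith))⟩

/-- **Heavy-traffic growth rate for bounded job sizes.** If `S` is bounded,
then `T̄(λ) = Θ(1/(1−ρ))` in heavy traffic: there are constants `0 < c ≤ C`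
and `lam₀ ∈ (0, 1/m)` such that for all `λ ∈ (lam₀, 1/m)`,
`c/(1−λm) ≤ T̄(λ) ≤ C/(1−λm)`. -/
theorem TsrptMean_theta_bounded
    (f : ℝ → ℝ) (m : ℝ)
    (hf_meas : Measurable f)
    (hf_nonneg : ∀ x, 0 ≤ f x)
    (hf_zero : ∀ x ≤ 0, f x = 0)
    (hf_prob : ∫ t in Set.Ioi (0:ℝ), f t = 1)
    (hm_int : Integrable (fun t => t * f t) (volume.restrict (Set.Ioi 0)))
    (hm_def : m = ∫ t in Set.Ioi (0:ℝ), t * f t)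
    (hm_pos : 0 < m)
    (hbounded : ∃ B > (0:ℝ), ∀ᵐ x : ℝ, B < x → f x = 0) :
    ∃ c C lam₀ : ℝ, 0 < c ∧ c ≤ C ∧ lam₀ ∈ Set.Ioo 0 (1/m) ∧
      ∀ lam ∈ Set.Ioo lam₀ (1/m),
        c / (1 - lam * m) ≤ TsrptMean f lam ∧
        TsrptMean f lam ≤ C / (1 - lam * m) :=
  TsrptMean_theta_bounded_general f m hf_nonneg hf_zero hf_prob hm_int hm_def hm_pos hbounded
end
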